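/- arXiv:1605.08344 — 2 statements merged into one kernel-verified Lean document; each statement's English description precedes it below -/
import Mathlib

section
/- Let R be a commutative ring, let h ∈ R[X] be a polynomial in one variable, and let d = h′ be its formal derivative. Then the R-algebra homomorphism R[T] → (R[X])[1/d] from the polynomial ring in one variable T to the localization of R[X] at d, sending T to h (and restricting to the identity on R), is an étale ring homomorphism, i.e., (R[X])[1/d] is formally étale and of finite presentation as an R[T]-algebra via this map. -/
/-!
An `R[T]`-algebra map `R[X][1/h'] → S` is the same as an element `x ∈ S` with `h(x) = T` and `h'(x)`
invertible. Modulo a square-zero ideal `I ⊆ S`, Taylor expansion is linear, so the Newton step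
`x ↦ x - h'(x)⁻¹ (h(x) - T)` lifts such an `x` from `S ⧸ I` to `S`, and uniquely; this is the
infinitesimal lifting property. Finite presentation comes from `R[X][1/h']` being finitely
presented over `R` while `R[T]` is of finite type over `R`.
-/

open Polynomial

namespace Polynomial

variable {R S : Type*} [CommRing R] [CommRing S]

section SquareZero

variable (ρ : R →+* S) (p : R[X])

theorem eval₂_add_of_sq_eq_zero (x : S) {e : S} (he : e ^ 2 = 0) :
    eval₂ ρ (x + e) p = eval₂ ρ x p + eval₂ ρ x (derivative p) * e := by
  simp only [eval₂_eq_eval_map, ← derivative_map, eval_add_of_sq_eq_zero _ _ _ he]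

theorem eq_of_eval₂_eq_of_sq_sub_eq_zero {x y : S} (hxy : (y - x) ^ 2 = 0)
    (hx : IsUnit (eval₂ ρ x (derivative p))) (heq : eval₂ ρ x p = eval₂ ρ y p) : x = y := by
  have htaylor := eval₂_add_of_sq_eq_zero ρ p x hxy
  rw [add_sub_cancel, ← heq, left_eq_add, hx.mul_right_eq_zero, sub_eq_zero] at htaylor
  exact htaylor.symm

/-- Newton's method over a square-zero ideal. -/
theorem exists_mem_eval₂_add_eq {I : Ideal S} (hI : I ^ 2 = ⊥) {x t : S}
    (hx : eval₂ ρ x p - t ∈ I) (hu : IsUnit (eval₂ ρ x (derivative p))) :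
    ∃ e ∈ I, eval₂ ρ (x + e) p = t := by
  obtain ⟨u, hu⟩ := hu
  have he : -(↑u⁻¹ * (eval₂ ρ x p - t)) ∈ I := I.neg_mem (I.mul_mem_left _ hx)
  refine ⟨_, he, ?_⟩
  rw [eval₂_add_of_sq_eq_zero ρ p x (Ideal.mem_bot.mp (hI ▸ Ideal.pow_mem_pow he 2)), ← hu,
    mul_neg, ← mul_assoc, Units.mul_inv, one_mul]
  ring

end SquareZero

section AwayDerivative

variable (h : R[X])

/-- The map `R[T] → R[X][1/h']`, `T ↦ h`, with `R[X]` also standing for `R[T]`. -/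
noncomputable def toAwayDerivative : R[X] →+* Localization.Away (derivative h) :=
  eval₂RingHom ((algebraMap R[X] _).comp C) (algebraMap R[X] _ h)

theorem toAwayDerivative_comp_C :
    (toAwayDerivative h).comp C = (algebraMap R[X] (Localization.Away (derivative h))).comp C :=
  eval₂RingHom_comp_C _ _

theorem toAwayDerivative_X : toAwayDerivative h X = algebraMap R[X] _ h :=
  eval₂_X _ _

variable {h}

theorem ringHom_ext_of_comp_toAwayDerivative {f g : Localization.Away (derivative h) →+* S}
    (hfg : f.comp (toAwayDerivative h) = g.comp (toAwayDerivative h))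
    (hX : f (algebraMap R[X] _ X) = g (algebraMap R[X] _ X)) : f = g := by
  refine IsLocalization.ringHom_ext (Submonoid.powers (derivative h)) (ringHom_ext' ?_ hX)
  simpa only [RingHom.comp_assoc, toAwayDerivative_comp_C] using congrArg (·.comp C) hfg

theorem comp_algebraMap_eq_eval₂RingHom_of_comp_toAwayDerivative {σ : R[X] →+* S}
    {f : Localization.Away (derivative h) →+* S} (hf : f.comp (toAwayDerivative h) = σ) :
    f.comp (algebraMap R[X] _) = eval₂RingHom (σ.comp C) (f (algebraMap R[X] _ X)) := by
  refine ringHom_ext' ?_ (by simp)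
  rw [← hf, RingHom.comp_assoc, RingHom.comp_assoc, toAwayDerivative_comp_C, eval₂RingHom_comp_C]

theorem eval₂_eq_and_isUnit_of_comp_toAwayDerivative {σ : R[X] →+* S}
    {f : Localization.Away (derivative h) →+* S} (hf : f.comp (toAwayDerivative h) = σ) :
    eval₂ (σ.comp C) (f (algebraMap R[X] _ X)) h = σ X ∧
      IsUnit (eval₂ (σ.comp C) (f (algebraMap R[X] _ X)) (derivative h)) := by
  have hψ := RingHom.congr_fun (comp_algebraMap_eq_eval₂RingHom_of_comp_toAwayDerivative hf)
  simp only [RingHom.comp_apply, coe_eval₂RingHom] at hψ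
  refine ⟨?_, ?_⟩
  · rw [← hψ, ← toAwayDerivative_X, ← hf, RingHom.comp_apply]
  · rw [← hψ]
    exact (IsLocalization.Away.algebraMap_isUnit _).map f

theorem exists_comp_toAwayDerivative_eq (σ : R[X] →+* S) {x : S}
    (hx : eval₂ (σ.comp C) x h = σ X) (hu : IsUnit (eval₂ (σ.comp C) x (derivative h))) :
    ∃ f : Localization.Away (derivative h) →+* S,
      f.comp (toAwayDerivative h) = σ ∧ f (algebraMap R[X] _ X) = x := by
  let f := IsLocalization.Away.lift (S := Localization.Away (derivative h)) (derivative h)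
    (g := eval₂RingHom (σ.comp C) x) hu
  have hf : f.comp (algebraMap R[X] _) = eval₂RingHom (σ.comp C) x :=
    IsLocalization.Away.lift_comp _ hu
  refine ⟨f, ringHom_ext' ?_ ?_, by simpa using RingHom.congr_fun hf X⟩
  · rw [RingHom.comp_assoc, toAwayDerivative_comp_C, ← RingHom.comp_assoc, hf,
      eval₂RingHom_comp_C]
  · simpa [toAwayDerivative_X] using (RingHom.congr_fun hf h).trans hx

theorem toAwayDerivative_lift_unique {I : Ideal S} (hI : I ^ 2 = ⊥)
    {f g : Localization.Away (derivative h) →+* S}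
    (hfg : f.comp (toAwayDerivative h) = g.comp (toAwayDerivative h))
    (hmk : (Ideal.Quotient.mk I).comp f = (Ideal.Quotient.mk I).comp g) : f = g := by
  set x := f (algebraMap R[X] _ X)
  set y := g (algebraMap R[X] _ X)
  obtain ⟨hfx, hunit⟩ := eval₂_eq_and_isUnit_of_comp_toAwayDerivative hfg
  obtain ⟨hgy, -⟩ := eval₂_eq_and_isUnit_of_comp_toAwayDerivative (rfl : _ = g.comp _)
  have hyx : y - x ∈ I := Ideal.Quotient.eq.mp (RingHom.congr_fun hmk _).symm
  refine ringHom_ext_of_comp_toAwayDerivative hfg (eq_of_eval₂_eq_of_sq_sub_eq_zero _ h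
    (Ideal.mem_bot.mp (hI ▸ Ideal.pow_mem_pow hyx 2)) hunit ?_)
  rw [hfx, hgy]

theorem toAwayDerivative_exists_lift {I : Ideal S} (hI : I ^ 2 = ⊥) (σ : R[X] →+* S)
    (f : Localization.Away (derivative h) →+* S ⧸ I)
    (hf : f.comp (toAwayDerivative h) = (Ideal.Quotient.mk I).comp σ) :
    ∃ g : Localization.Away (derivative h) →+* S,
      g.comp (toAwayDerivative h) = σ ∧ (Ideal.Quotient.mk I).comp g = f := by
  set ρ := σ.comp C
  obtain ⟨x, hx⟩ := Ideal.Quotient.mk_surjective (f (algebraMap R[X] _ X))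
  have hmk : ∀ p, Ideal.Quotient.mk I (eval₂ ρ x p) = f (algebraMap R[X] _ p) := fun p => by
    rw [hom_eval₂, hx]
    exact (RingHom.congr_fun (comp_algebraMap_eq_eval₂RingHom_of_comp_toAwayDerivative hf) p).symm
  have hunit : ∀ e ∈ I, IsUnit (eval₂ ρ (x + e) (derivative h)) := fun e he => by
    rw [← IsNilpotent.isUnit_quotient_mk_iff ⟨2, hI⟩, hom_eval₂, map_add,
      Ideal.Quotient.eq_zero_iff_mem.mpr he, add_zero, ← hom_eval₂, hmk]
    exact (IsLocalization.Away.algebraMap_isUnit _).map f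
  have hroot : eval₂ ρ x h - σ X ∈ I := by
    rw [← Ideal.Quotient.eq, hmk, ← toAwayDerivative_X, ← RingHom.comp_apply, hf]
    rfl
  obtain ⟨e, he, hxe⟩ := exists_mem_eval₂_add_eq ρ h hI hroot (by simpa using hunit 0 I.zero_mem)
  obtain ⟨g, hgσ, hgX⟩ := exists_comp_toAwayDerivative_eq σ hxe (hunit e he)
  refine ⟨g, hgσ, ringHom_ext_of_comp_toAwayDerivative ?_ ?_⟩
  · rw [RingHom.comp_assoc, hgσ, hf]
  · rw [RingHom.comp_apply, hgX, map_add, Ideal.Quotient.eq_zero_iff_mem.mpr he, add_zero, hx]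

variable (h)

theorem formallyEtale_toAwayDerivative : (toAwayDerivative h).FormallyEtale := by
  let := (toAwayDerivative h).toAlgebra
  refine Algebra.FormallyEtale.iff_comp_bijective.mpr fun S _ _ I hI =>
    ⟨fun f g hfg => AlgHom.coe_ringHom_injective ?_, fun f => ?_⟩
  · exact toAwayDerivative_lift_unique hI (f.comp_algebraMap.trans g.comp_algebraMap.symm)
      congr(($hfg).toRingHom)
  · obtain ⟨g, hgσ, hg⟩ :=
      toAwayDerivative_exists_lift hI (algebraMap R[X] S) f.toRingHom f.comp_algebraMap
    exact ⟨{ g with commutes' := RingHom.congr_fun hgσ }, AlgHom.coe_ringHom_injective hg⟩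

theorem finitePresentation_toAwayDerivative : (toAwayDerivative h).FinitePresentation := by
  refine RingHom.FinitePresentation.of_comp_finiteType C ?_ ?_
  · rw [toAwayDerivative_comp_C]
    exact (RingHom.finitePresentation_algebraMap.mpr
      (IsLocalization.Away.finitePresentation (derivative h))).comp
      (RingHom.finitePresentation_algebraMap.mpr inferInstance)
  · exact RingHom.finiteType_algebraMap.mpr inferInstance

end AwayDerivative

end Polynomial

/-- For a commutative ring `R` and a polynomial `h ∈ R[X]` with formal derivative `d = h′`,
the `R`-algebra map `R[T] → R[X][1/d]`, `T ↦ h`, is étale. -/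
theorem etale_localization_derivative (R : Type*) [CommRing R] (h : R[X]) :
    letI : Algebra R[X] (Localization.Away (derivative h)) :=
      (eval₂RingHom ((algebraMap R[X] (Localization.Away (derivative h))).comp (C : R →+* R[X]))
        (algebraMap R[X] (Localization.Away (derivative h)) h)).toAlgebra
    Algebra.Etale R[X] (Localization.Away (derivative h)) :=
  @Algebra.Etale.mk _ _ _ _ (toAwayDerivative h).toAlgebra
    (formallyEtale_toAwayDerivative h) (finitePresentation_toAwayDerivative h)
end

section
/- Let R be a commutative ring and h ∈ R[X] a polynomial in one variable whose formal derivative h′ becomes invertible in the localization (R[X])[1/h′]. Then the quotient R-algebra (R[X])[1/h′]/(h) is étale over R, i.e., it is a formally étale R-algebra of finite presentation. -/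
/-!
An `R`-algebra map from `R[X][1/h′]/(h)` to `B` is the same as a root `b` of `h` in `B` at
which `h′(b)` is a unit. Across a square-zero ideal `I ⊆ B` such roots lift uniquely from
`B ⧸ I`: if `h(a) ∈ I` and `h′(a) u = 1`, the Newton step `a - h(a) u` is a root, and by
Taylor expansion two roots `b` and `b + ε` with `ε ∈ I` satisfy `h′(b) ε = 0`, so `ε = 0`.
This is the unique lifting property; finite presentation is inherited from `R[X]` through a
localization and a quotient by a principal ideal.
-/

open Polynomial

section SquareZero

variable {R B : Type*} [CommRing R] [CommRing B] [Algebra R B] (p : R[X]) {I : Ideal B}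

theorem Polynomial.eq_of_aeval_eq_zero_of_sub_mem_of_sq_eq_bot (hI : I ^ 2 = ⊥) {a b : B}
    (hab : a - b ∈ I) (ha : aeval a p = 0) (hb : aeval b p = 0)
    (hu : IsUnit (aeval b (derivative p))) : a = b := by
  have hsq : (a - b) ^ 2 = 0 := hI.le (Ideal.pow_mem_pow hab 2)
  have hexp := aeval_add_of_sq_eq_zero p b (a - b) hsq
  rw [add_sub_cancel, ha, hb, zero_add, eq_comm, hu.mul_right_eq_zero, sub_eq_zero] at hexp
  exact hexp

theorem Polynomial.exists_aeval_eq_zero_of_sq_eq_bot (hI : I ^ 2 = ⊥) (a : B)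
    (ha : aeval (Ideal.Quotient.mk I a) p = 0)
    (hu : IsUnit (aeval (Ideal.Quotient.mk I a) (derivative p))) :
    ∃ b, Ideal.Quotient.mk I b = Ideal.Quotient.mk I a ∧ aeval b p = 0 ∧
      IsUnit (aeval b (derivative p)) := by
  have hmk (c : B) (q : R[X]) :
      aeval (Ideal.Quotient.mk I c) q = Ideal.Quotient.mk I (aeval c q) :=
    aeval_algHom_apply (Ideal.Quotient.mkₐ R I) c q
  have hunit (c : B) (hc : Ideal.Quotient.mk I c = Ideal.Quotient.mk I a) :
      IsUnit (aeval c (derivative p)) := by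
    rwa [← IsNilpotent.isUnit_quotient_mk_iff ⟨2, hI⟩, ← hmk, hc]
  have hpa : aeval a p ∈ I := Ideal.Quotient.eq_zero_iff_mem.mp (hmk a p ▸ ha)
  obtain ⟨u, hu⟩ := (hunit a rfl).exists_right_inv
  -- Newton's step: on a square-zero ideal it lands on a root at once.
  set b := a - aeval a p * u
  have hmkb : Ideal.Quotient.mk I b = Ideal.Quotient.mk I a :=
    Ideal.Quotient.eq.mpr (by simpa [b] using I.mul_mem_right u hpa)
  refine ⟨b, hmkb, ?_, hunit b hmkb⟩
  have hsq : (-(aeval a p * u)) ^ 2 = 0 := by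
    rw [neg_sq, mul_pow, hI.le (Ideal.pow_mem_pow hpa 2), zero_mul]
  rw [show b = a + -(aeval a p * u) by ring, aeval_add_of_sq_eq_zero p a _ hsq]
  linear_combination (-aeval a p) * hu

end SquareZero

section StandardEtale

variable {R : Type*} [CommRing R]

abbrev StandardEtaleQuotient (h : R[X]) : Type _ :=
  Localization.Away (derivative h) ⧸
    Ideal.span {algebraMap R[X] (Localization.Away (derivative h)) h}

namespace StandardEtaleQuotient

variable (h : R[X]) {B : Type*} [CommRing B] [Algebra R B]

noncomputable def root : StandardEtaleQuotient h :=
  Ideal.Quotient.mk _ (algebraMap R[X] (Localization.Away (derivative h)) .X)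

def HasMap (x : B) : Prop :=
  aeval x h = 0 ∧ IsUnit (aeval x (derivative h))

theorem aeval_root (p : R[X]) :
    aeval (root h) p =
      Ideal.Quotient.mk _ (algebraMap R[X] (Localization.Away (derivative h)) p) := by
  show aeval (root h) p = ((Ideal.Quotient.mkₐ R _).comp
    (IsScalarTower.toAlgHom R R[X] (Localization.Away (derivative h)))) p
  congr 1
  exact Polynomial.algHom_ext (by simp [root])

theorem hasMap_root : HasMap h (root h) := by
  refine ⟨?_, ?_⟩
  · rw [aeval_root, Ideal.Quotient.eq_zero_iff_mem]
    exact Ideal.subset_span rfl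
  · rw [aeval_root]
    exact (IsLocalization.Away.algebraMap_isUnit _).map _

variable {h} in
theorem HasMap.map {x : B} (hx : HasMap h x) {C : Type*} [CommRing C] [Algebra R C]
    (f : B →ₐ[R] C) : HasMap h (f x) :=
  ⟨by rw [aeval_algHom_apply, hx.1, map_zero], by rw [aeval_algHom_apply]; exact hx.2.map f⟩

variable {h} in
theorem hom_ext {f g : StandardEtaleQuotient h →ₐ[R] B} (H : f (root h) = g (root h)) :
    f = g :=
  Ideal.Quotient.algHom_ext R <|
    IsLocalization.algHom_ext (Submonoid.powers (derivative h)) (Polynomial.algHom_ext H)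

noncomputable def lift (x : B) (hx : HasMap h x) : StandardEtaleQuotient h →ₐ[R] B :=
  Ideal.Quotient.liftₐ _ (IsLocalization.Away.liftAlgHom (derivative h) (f := aeval x) hx.2) <| by
    intro a ha
    obtain ⟨c, rfl⟩ := Ideal.mem_span_singleton'.mp ha
    simp [hx.1]

theorem lift_root (x : B) (hx : HasMap h x) : lift h x hx (root h) = x :=
  (IsLocalization.Away.lift_eq _ hx.2 _).trans (aeval_X x)

instance formallyEtale : Algebra.FormallyEtale R (StandardEtaleQuotient h) := by
  refine Algebra.FormallyEtale.iff_comp_bijective.mpr fun B _ _ I hI ↦ ⟨?_, ?_⟩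
  · intro f₁ f₂ e
    refine hom_ext (eq_of_aeval_eq_zero_of_sub_mem_of_sq_eq_bot h hI ?_
      ((hasMap_root h).map f₁).1 ((hasMap_root h).map f₂).1 ((hasMap_root h).map f₂).2)
    exact Ideal.Quotient.eq.mp (AlgHom.congr_fun e (root h))
  · intro g
    obtain ⟨a, ha⟩ := Ideal.Quotient.mk_surjective (g (root h))
    have hga : HasMap h (Ideal.Quotient.mk I a) := ha ▸ (hasMap_root h).map g
    obtain ⟨b, hba, hb⟩ : ∃ b, _ ∧ HasMap h b :=
      exists_aeval_eq_zero_of_sq_eq_bot h hI a hga.1 hga.2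
    exact ⟨lift h b hb, hom_ext (by
      rw [AlgHom.comp_apply, lift_root, Ideal.Quotient.mkₐ_eq_mk, hba, ha])⟩

instance finitePresentation : Algebra.FinitePresentation R (StandardEtaleQuotient h) :=
  have := IsLocalization.Away.finitePresentation (R := R[X]) (derivative h)
    (S := Localization.Away (derivative h))
  have := Algebra.FinitePresentation.trans R R[X] (Localization.Away (derivative h))
  .quotient (Submodule.fg_span_singleton _)

end StandardEtaleQuotient

end StandardEtale

theorem standard_etale_is_etale_general (R : Type*) [CommRing R] (h : R[X]) :
    Algebra.Etale R
      (Localization.Away (derivative h) ⧸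
        Ideal.span {algebraMap R[X] (Localization.Away (derivative h)) h}) :=
  ⟨StandardEtaleQuotient.formallyEtale h, StandardEtaleQuotient.finitePresentation h⟩

/-- For a commutative ring `R` and a polynomial `h ∈ R[X]` whose formal derivative `h′`
becomes invertible in the localization `R[X][1/h′]`, the quotient `R`-algebra
`R[X][1/h′]/(h)` is étale over `R` (standard étale algebras are étale). -/
theorem standard_etale_is_etale (R : Type*) [CommRing R] (h : R[X])
    (hunit : IsUnit (algebraMap R[X] (Localization.Away (derivative h)) (derivative h))) :
    Algebra.Etale R
      (Localization.Away (derivative h) ⧸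
        Ideal.span {algebraMap R[X] (Localization.Away (derivative h)) h}) :=
  standard_etale_is_etale_general R h
end
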